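/- Let π^E be a deterministic policy in an episodic MDP with rewards r_h(s,a) ∈ [0,1], with expert action a^E_h(s) at state s and step h. Then for any policy π, V(π^E) − V(π) ≤ H · Σ_{h=1}^H Σ_s d^{π^E}_h(s) (1 − π_h(a^E_h(s)|s)), where d^{π^E}_h(s) = Σ_a d^{π^E}_h(s,a). -/

import Mathlib

open Finset

/-- An episodic MDP `M = (S, A, P, r, H, ρ)` with finite state space `S`, finite action
space `A`, horizon `H`, initial state distribution `ρ`, non-stationary transitions `P` and
rewards `r` taking values in `[0,1]`.  Time steps are indexed by `0, 1, …, H-1`. -/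
structure MDP (S A : Type) [Fintype S] [Fintype A] where
  H : ℕ
  ρ : S → ℝ
  P : ℕ → S → A → S → ℝ
  r : ℕ → S → A → ℝ
  ρ_nonneg : ∀ s, 0 ≤ ρ s
  ρ_sum : ∑ s, ρ s = 1
  P_nonneg : ∀ h s a s', 0 ≤ P h s a s'
  P_sum : ∀ h s a, ∑ s', P h s a s' = 1
  r_nonneg : ∀ h s a, 0 ≤ r h s a
  r_le_one : ∀ h s a, r h s a ≤ 1

variable {S A : Type} [Fintype S] [Fintype A] [DecidableEq S] [DecidableEq A]

/-- A (time-dependent, stochastic) policy: `π h s a` is the probability of action `a`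
at state `s` in step `h`. -/
def IsPolicy (π : ℕ → S → A → ℝ) : Prop :=
  (∀ h s a, 0 ≤ π h s a) ∧ (∀ h s, ∑ a, π h s a = 1)

/-- A deterministic policy: at each step and state it puts all mass on a single action. -/
def IsDetPolicy (π : ℕ → S → A → ℝ) : Prop :=
  ∃ f : ℕ → S → A, ∀ h s a, π h s a = if a = f h s then 1 else 0

/-- The state distribution `d^π_h(s)` of policy `π` at step `h`. -/
noncomputable def dState (M : MDP S A) (π : ℕ → S → A → ℝ) : ℕ → S → ℝ
  | 0 => M.ρ
  | h + 1 => fun s' => ∑ s, ∑ a, dState M π h s * π h s a * M.P h s a s'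

/-- The state-action distribution `d^π_h(s, a)` of policy `π` at step `h`. -/
noncomputable def dSA (M : MDP S A) (π : ℕ → S → A → ℝ) (h : ℕ) (s : S) (a : A) : ℝ :=
  dState M π h s * π h s a

/-- The policy value `V(π) = E[Σ_{h} r_h(s_h, a_h)] = Σ_h Σ_{(s,a)} d^π_h(s,a) r_h(s,a)`. -/
noncomputable def value (M : MDP S A) (π : ℕ → S → A → ℝ) : ℝ :=
  ∑ h ∈ Finset.range M.H, ∑ s, ∑ a, dSA M π h s a * M.r h s a

/-- Probability that rolling out policy `π` in MDP `M` produces trajectory `tr`. -/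
noncomputable def trajProb (M : MDP S A) (π : ℕ → S → A → ℝ) (tr : Fin M.H → S × A) : ℝ :=
  ∏ h : Fin M.H,
    ((if (h : ℕ) = 0 then M.ρ (tr h).1 else 1) * π h (tr h).1 (tr h).2 *
      (if hh : (h : ℕ) + 1 < M.H then M.P h (tr h).1 (tr h).2 (tr ⟨(h : ℕ) + 1, hh⟩).1 else 1))

/-- A labeled dataset of `N` trajectories of length `H`; the Boolean label records whether
the trajectory was generated by the expert (`true`) or by the behavior policy (`false`).
The expert dataset `D^E` is the sub-dataset labeled `true`, the supplementary dataset `D^S`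
is the sub-dataset labeled `false`, and the union dataset `D^U` is the whole dataset. -/
abbrev Dataset (S A : Type) (H N : ℕ) := Fin N → (Fin H → S × A) × Bool

/-- Probability of observing the labeled dataset `D` under Assumption 1 (each of the `N`
trajectories is independently rolled out from the expert `πE` with probability `η` and
from the behavior policy `πβ` with probability `1 - η`). -/
noncomputable def datasetProb (M : MDP S A) (πE πβ : ℕ → S → A → ℝ) (η : ℝ) {N : ℕ}
    (D : Dataset S A M.H N) : ℝ :=
  ∏ i, (if (D i).2 then η * trajProb M πE (D i).1 else (1 - η) * trajProb M πβ (D i).1)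

/-- Expectation of `f` over the randomness of the dataset collection (Assumption 1). -/
noncomputable def expect (M : MDP S A) (πE πβ : ℕ → S → A → ℝ) (η : ℝ) (N : ℕ)
    (f : Dataset S A M.H N → ℝ) : ℝ :=
  ∑ D : Dataset S A M.H N, datasetProb M πE πβ η D * f D

/-- Whether the step-`h` state-action pair of trajectory `tr` equals `(s, a)`. -/
def hit {H : ℕ} (tr : Fin H → S × A) (h : ℕ) (s : S) (a : A) : Bool :=
  if hh : h < H then decide (tr ⟨h, hh⟩ = (s, a)) else false

/-- `n_h(s, a)`: the number of trajectories of `D` (among those whose label is selected by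
`keep`) whose step-`h` state-action pair is `(s, a)`. -/
def countSA {H N : ℕ} (D : Dataset S A H N) (keep : Bool → Bool) (h : ℕ) (s : S) (a : A) : ℕ :=
  (Finset.univ.filter fun i : Fin N => (keep (D i).2 && hit (D i).1 h s a) = true).card

/-- The behavioral cloning policy determined by counts `n`:
`π_h(a|s) = n_h(s,a)/n_h(s)` if `n_h(s) > 0` and `1/|A|` otherwise. -/
noncomputable def bcFromCounts (n : ℕ → S → A → ℕ) : ℕ → S → A → ℝ := fun h s a =>
  if 0 < ∑ a', n h s a' then (n h s a : ℝ) / (∑ a', (n h s a' : ℝ))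
  else 1 / (Fintype.card A : ℝ)

/-- The behavioral cloning policy of the sub-dataset of `D` selected by `keep`
(`keep = fun b => b` gives BC on the expert dataset `D^E`;
 `keep = fun _ => true` gives BC on the union dataset `D^U`, i.e., NBCU). -/
noncomputable def bcPolicy {H N : ℕ} (D : Dataset S A H N) (keep : Bool → Bool) :
    ℕ → S → A → ℝ :=
  bcFromCounts (fun h s a => countSA D keep h s a)

/-!
Compare the two occupancy measures step by step. Since rewards lie in `[0,1]` and both
occupancy measures have mass one, the reward gap at step `h` is at most half the `ℓ¹` distance
between `d^{π^E}_h(·,·)` and `d^π_h(·,·)`. That distance does not grow under the transition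
kernel and increases at step `t` by at most `Σ_s d^{π^E}_t(s) ‖π^E_t(·|s) − π_t(·|s)‖₁`,
which equals `2 Σ_s d^{π^E}_t(s) (1 − π_t(a^E_t(s)|s))` for a deterministic expert. Hence each of
the `H` per-step gaps is bounded by the total expert-mismatch mass.
-/

theorem Finset.sum_sub_mul_le_half_sum_abs {ι : Type*} (t : Finset ι) (p q r : ι → ℝ)
    (hpq : ∑ i ∈ t, p i = ∑ i ∈ t, q i) (hr₀ : ∀ i ∈ t, 0 ≤ r i) (hr₁ : ∀ i ∈ t, r i ≤ 1) :
    ∑ i ∈ t, (p i - q i) * r i ≤ (∑ i ∈ t, |p i - q i|) / 2 := by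
  -- shifting `r` by the constant `1/2` does not change the sum, and `|r - 1/2| ≤ 1/2`
  have hshift : ∑ i ∈ t, (p i - q i) * r i = ∑ i ∈ t, (p i - q i) * (r i - 1 / 2) := by
    simp only [mul_sub, Finset.sum_sub_distrib, ← Finset.sum_mul, hpq, sub_self, zero_mul,
      sub_zero]
  rw [hshift, Finset.sum_div]
  refine Finset.sum_le_sum fun i hi => ?_
  calc (p i - q i) * (r i - 1 / 2) ≤ |p i - q i| * |r i - 1 / 2| := by
        rw [← abs_mul]; exact le_abs_self _
    _ ≤ |p i - q i| * (1 / 2) := by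
        gcongr
        rw [abs_le]
        constructor <;> linarith [hr₀ i hi, hr₁ i hi]
    _ = |p i - q i| / 2 := by ring

theorem Fintype.sum_abs_ite_sub_eq_two_mul {ι : Type*} [Fintype ι] [DecidableEq ι] (p : ι → ℝ) (i₀ : ι)
    (hp : ∀ i, 0 ≤ p i) (hsum : ∑ i, p i = 1) :
    ∑ i, |(if i = i₀ then 1 else 0) - p i| = 2 * (1 - p i₀) := by
  have hrest : ∑ i ∈ Finset.univ.erase i₀, |(if i = i₀ then 1 else 0) - p i|
      = ∑ i ∈ Finset.univ.erase i₀, p i :=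
    Finset.sum_congr rfl fun i hi => by
      rw [if_neg (Finset.ne_of_mem_erase hi), zero_sub, abs_neg, abs_of_nonneg (hp i)]
  have hle : p i₀ ≤ 1 := hsum ▸ Finset.single_le_sum (fun i _ => hp i) (Finset.mem_univ i₀)
  rw [← Finset.add_sum_erase _ _ (Finset.mem_univ i₀)] at hsum ⊢
  rw [hrest, if_pos rfl, abs_of_nonneg (sub_nonneg.2 hle)]
  linarith

omit [Fintype S] [DecidableEq S] in
theorem isPolicy_of_eq_ite {π : ℕ → S → A → ℝ} {f : ℕ → S → A}
    (hπ : ∀ h s a, π h s a = if a = f h s then 1 else 0) : IsPolicy π := by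
  refine ⟨fun h s a => ?_, fun h s => ?_⟩
  · rw [hπ]; split_ifs <;> norm_num
  · simp only [hπ, Finset.sum_ite_eq', Finset.mem_univ, if_true]

noncomputable def policyL1Gap (M : MDP S A) (π₁ π₂ : ℕ → S → A → ℝ) (h : ℕ) : ℝ :=
  ∑ s, dState M π₁ h s * ∑ a, |π₁ h s a - π₂ h s a|

section Occupancy

omit [DecidableEq S] [DecidableEq A]

variable (M : MDP S A) {π π₁ π₂ : ℕ → S → A → ℝ}

theorem dState_succ (π : ℕ → S → A → ℝ) (h : ℕ) (s' : S) :
    dState M π (h + 1) s' = ∑ s, ∑ a, dSA M π h s a * M.P h s a s' :=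
  rfl

theorem dState_nonneg (hπ : ∀ h s a, 0 ≤ π h s a) (h : ℕ) (s : S) : 0 ≤ dState M π h s := by
  induction h generalizing s with
  | zero => exact M.ρ_nonneg s
  | succ h ih =>
    exact Finset.sum_nonneg fun s' _ => Finset.sum_nonneg fun a _ =>
      mul_nonneg (mul_nonneg (ih s') (hπ h s' a)) (M.P_nonneg h s' a s)

theorem sum_dSA (hπ : ∀ h s, ∑ a, π h s a = 1) (h : ℕ) : ∑ s, ∑ a, dSA M π h s a = 1 := by
  induction h with
  | zero => simp only [dSA, ← Finset.mul_sum, hπ, mul_one, dState, M.ρ_sum]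
  | succ h ih =>
    calc ∑ s', ∑ a, dSA M π (h + 1) s' a = ∑ s', dState M π (h + 1) s' := by
          simp only [dSA, ← Finset.mul_sum, hπ, mul_one]
      _ = ∑ s, ∑ a, dSA M π h s a * ∑ s', M.P h s a s' := by
          simp only [dState_succ, Finset.mul_sum]
          rw [Finset.sum_comm]
          exact Finset.sum_congr rfl fun s _ => Finset.sum_comm
      _ = 1 := by simp only [M.P_sum, mul_one, ih]

/-- The transition kernel is an `ℓ¹` contraction. -/
theorem sum_abs_dState_succ_sub_le (π₁ π₂ : ℕ → S → A → ℝ) (h : ℕ) :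
    ∑ s', |dState M π₁ (h + 1) s' - dState M π₂ (h + 1) s'| ≤
      ∑ s, ∑ a, |dSA M π₁ h s a - dSA M π₂ h s a| := by
  calc ∑ s', |dState M π₁ (h + 1) s' - dState M π₂ (h + 1) s'|
      = ∑ s', |∑ s, ∑ a, (dSA M π₁ h s a - dSA M π₂ h s a) * M.P h s a s'| := by
        simp only [dState_succ, sub_mul, Finset.sum_sub_distrib]
    _ ≤ ∑ s', ∑ s, ∑ a, |dSA M π₁ h s a - dSA M π₂ h s a| * M.P h s a s' := by
        refine Finset.sum_le_sum fun s' _ => ?_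
        refine (Finset.abs_sum_le_sum_abs _ _).trans (Finset.sum_le_sum fun s _ => ?_)
        refine (Finset.abs_sum_le_sum_abs _ _).trans_eq (Finset.sum_congr rfl fun a _ => ?_)
        rw [abs_mul, abs_of_nonneg (M.P_nonneg h s a s')]
    _ = ∑ s, ∑ a, |dSA M π₁ h s a - dSA M π₂ h s a| := by
        rw [Finset.sum_comm]
        refine Finset.sum_congr rfl fun s _ => ?_
        rw [Finset.sum_comm]
        simp only [← Finset.mul_sum, M.P_sum, mul_one]

theorem sum_abs_dSA_sub_le_add (hπ₁ : ∀ h s a, 0 ≤ π₁ h s a) (hπ₂ : IsPolicy π₂) (h : ℕ) :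
    ∑ s, ∑ a, |dSA M π₁ h s a - dSA M π₂ h s a| ≤
      policyL1Gap M π₁ π₂ h + ∑ s, |dState M π₁ h s - dState M π₂ h s| := by
  rw [policyL1Gap, ← Finset.sum_add_distrib]
  refine Finset.sum_le_sum fun s _ => ?_
  have hd₁ := dState_nonneg M hπ₁ h s
  simp only [dSA]
  generalize dState M π₁ h s = d₁ at hd₁ ⊢
  generalize dState M π₂ h s = d₂
  calc ∑ a, |d₁ * π₁ h s a - d₂ * π₂ h s a|
      = ∑ a, |d₁ * (π₁ h s a - π₂ h s a) + (d₁ - d₂) * π₂ h s a| :=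
        Finset.sum_congr rfl fun a _ => by ring_nf
    _ ≤ ∑ a, (d₁ * |π₁ h s a - π₂ h s a| + |d₁ - d₂| * π₂ h s a) := by
        gcongr with a
        refine (abs_add_le _ _).trans_eq ?_
        rw [abs_mul, abs_mul, abs_of_nonneg hd₁, abs_of_nonneg (hπ₂.1 h s a)]
    _ = d₁ * ∑ a, |π₁ h s a - π₂ h s a| + |d₁ - d₂| := by
        rw [Finset.sum_add_distrib, ← Finset.mul_sum, ← Finset.mul_sum, hπ₂.2 h s, mul_one]

theorem sum_abs_dSA_sub_le (hπ₁ : ∀ h s a, 0 ≤ π₁ h s a) (hπ₂ : IsPolicy π₂) (h : ℕ) :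
    ∑ s, ∑ a, |dSA M π₁ h s a - dSA M π₂ h s a| ≤
      ∑ t ∈ Finset.range (h + 1), policyL1Gap M π₁ π₂ t := by
  induction h with
  | zero =>
    have hρ : ∀ s, |dState M π₁ 0 s - dState M π₂ 0 s| = 0 := fun s =>
      show |M.ρ s - M.ρ s| = 0 by rw [sub_self, abs_zero]
    simpa only [hρ, Finset.sum_const_zero, add_zero, zero_add, Finset.range_one,
      Finset.sum_singleton]
      using sum_abs_dSA_sub_le_add M hπ₁ hπ₂ 0
  | succ h ih =>
    rw [Finset.sum_range_succ]
    linarith [sum_abs_dSA_sub_le_add M hπ₁ hπ₂ (h + 1), sum_abs_dState_succ_sub_le M π₁ π₂ h]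

theorem policyL1Gap_nonneg (hπ₁ : ∀ h s a, 0 ≤ π₁ h s a) (h : ℕ) :
    0 ≤ policyL1Gap M π₁ π₂ h :=
  Finset.sum_nonneg fun s _ =>
    mul_nonneg (dState_nonneg M hπ₁ h s) (Finset.sum_nonneg fun _ _ => abs_nonneg _)

theorem value_sub_le (hπ₁ : IsPolicy π₁) (hπ₂ : IsPolicy π₂) :
    value M π₁ - value M π₂ ≤
      (M.H : ℝ) / 2 * ∑ t ∈ Finset.range M.H, policyL1Gap M π₁ π₂ t := by
  have hstep : ∀ h ∈ Finset.range M.H,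
      ∑ s, ∑ a, dSA M π₁ h s a * M.r h s a - ∑ s, ∑ a, dSA M π₂ h s a * M.r h s a ≤
        (∑ t ∈ Finset.range M.H, policyL1Gap M π₁ π₂ t) / 2 := by
    intro h hh
    have hmass : ∑ x : S × A, dSA M π₁ h x.1 x.2 = ∑ x : S × A, dSA M π₂ h x.1 x.2 := by
      simp only [Fintype.sum_prod_type, sum_dSA M hπ₁.2, sum_dSA M hπ₂.2]
    have hreward := Finset.sum_sub_mul_le_half_sum_abs Finset.univ
      (fun x : S × A => dSA M π₁ h x.1 x.2) (fun x => dSA M π₂ h x.1 x.2)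
      (fun x => M.r h x.1 x.2) hmass (fun _ _ => M.r_nonneg _ _ _) (fun _ _ => M.r_le_one _ _ _)
    simp only [Fintype.sum_prod_type, sub_mul, Finset.sum_sub_distrib] at hreward
    refine hreward.trans (div_le_div_of_nonneg_right ?_ zero_le_two)
    exact (sum_abs_dSA_sub_le M hπ₁.1 hπ₂ h).trans <|
      Finset.sum_le_sum_of_subset_of_nonneg (Finset.range_subset_range.2 (Finset.mem_range.1 hh))
        fun t _ _ => policyL1Gap_nonneg M hπ₁.1 t
  calc value M π₁ - value M π₂
      ≤ ∑ _h ∈ Finset.range M.H, (∑ t ∈ Finset.range M.H, policyL1Gap M π₁ π₂ t) / 2 := by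
        rw [value, value, ← Finset.sum_sub_distrib]
        exact Finset.sum_le_sum hstep
    _ = _ := by rw [Finset.sum_const, Finset.card_range, nsmul_eq_mul]; ring

end Occupancy

/-- **Policy difference bound for a deterministic expert.**
If `π^E` is a deterministic policy taking expert action `a^E_h(s)` at state `s` and step
`h`, then for any policy `π`,
`V(π^E) − V(π) ≤ H · Σ_h Σ_s d^{π^E}_h(s) (1 − π_h(a^E_h(s)|s))`. -/
theorem deterministic_expert_policy_difference
    (M : MDP S A) (πE π : ℕ → S → A → ℝ) (aE : ℕ → S → A)
    (hdet : ∀ h s a, πE h s a = if a = aE h s then 1 else 0)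
    (hπ : IsPolicy π) :
    value M πE - value M π ≤
      (M.H : ℝ) * ∑ h ∈ Finset.range M.H, ∑ s,
        dState M πE h s * (1 - π h s (aE h s)) := by
  have hgap : ∀ h, policyL1Gap M πE π h = 2 * ∑ s, dState M πE h s * (1 - π h s (aE h s)) := by
    intro h
    simp only [policyL1Gap, hdet]
    rw [Finset.mul_sum]
    refine Finset.sum_congr rfl fun s _ => ?_
    rw [Fintype.sum_abs_ite_sub_eq_two_mul _ _ (hπ.1 h s) (hπ.2 h s)]
    ring
  calc value M πE - value M π
      ≤ (M.H : ℝ) / 2 * ∑ t ∈ Finset.range M.H, policyL1Gap M πE π t :=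
        value_sub_le M (isPolicy_of_eq_ite hdet) hπ
    _ = _ := by simp only [hgap, ← Finset.mul_sum]; ring
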